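/- On Y = T² × [0, 2j] with metric g_j(x,y,z) = (dz − x̂·dy)² + dy² + dx², where x̂ = min(x, 2j−x), the pointwise norm of the 1-form dz satisfies |dz|² = 1 + x̂². Consequently any surface M' in the relative homology class of the cylinder {z = const} has area at least ∫₁^{j−1} √(1+x²) dx, which grows quadratically in j. -/

import Mathlib

/-!
STATEMENT 7: On `Y = T² × [0,2j]` with metric
`g_j(x,y,z) = (dz − x̂·dy)² + dy² + dx²`, `x̂ = min(x, 2j−x)`, the metric has, in the
coordinate coframe `(dx, dy, dz)`, the matrix
`G(x̂) = [[1,0,0],[0,1+x̂²,−x̂],[0,−x̂,1]]`, which is positive definite; the pointwise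
(dual) norm of the 1-form `dz` is given by `|dz|² = (G(x̂)⁻¹)_{zz} = 1 + x̂²`.
Consequently (by the calibration argument with the form `φ(x)·*dz`) any surface `M'` in the
relative homology class of the cylinder `{z = const}` has area at least
`∫₁^{j−1} √(1+x²) dx`, which grows quadratically in `j`: it is at least `(j−2)²/2`.
(The area lower bound for surfaces is recorded here through the calibration integral; the
quadratic growth of that integral is the last clause.)
-/

open Matrix intervalIntegral

noncomputable def cylMetricMatrix (c : ℝ) : Matrix (Fin 3) (Fin 3) ℝ :=
  !![1, 0, 0;
     0, 1 + c ^ 2, -c;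
     0, -c, 1]

/-!
In the orthonormal coframe `dx, dy, dz − x̂ dy` the metric is `Bᵀ B` with `B` unipotent, hence
positive definite; the dual metric `G⁻¹` on 1-forms has `zz`-entry `|dz|² = 1 + x̂²`. Since
`√(1 + x²) ≥ x`, the calibration integral
`∫₁^{j−1} √(1 + x²) dx` dominates `∫₁^{j−1} x dx = ((j − 1)² − 1)/2 ≥ (j − 2)²/2`.
-/

/-- Rows are the coframe `dx, dy, dz − c dy` in the coordinates `(dx, dy, dz)`. -/
def cylCoframe (c : ℝ) : Matrix (Fin 3) (Fin 3) ℝ :=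
  !![1, 0, 0;
     0, 1, 0;
     0, -c, 1]

lemma cylMetricMatrix_eq_transpose_mul_cylCoframe (c : ℝ) :
    cylMetricMatrix c = (cylCoframe c)ᵀ * cylCoframe c := by
  ext i k
  fin_cases i <;> fin_cases k <;>
    simp [cylMetricMatrix, cylCoframe, mul_apply, Fin.sum_univ_three, sq]

lemma det_cylCoframe (c : ℝ) : (cylCoframe c).det = 1 := by
  simp [cylCoframe, det_fin_three]

lemma cylMetricMatrix_posDef (c : ℝ) : (cylMetricMatrix c).PosDef := by
  have hB : IsUnit (cylCoframe c) := by
    rw [isUnit_iff_isUnit_det, det_cylCoframe]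
    exact isUnit_one
  rw [cylMetricMatrix_eq_transpose_mul_cylCoframe, ← conjTranspose_eq_transpose_of_trivial]
  exact PosDef.conjTranspose_mul_self _ (mulVec_injective_of_isUnit hB)

lemma cylMetricMatrix_inv (c : ℝ) :
    (cylMetricMatrix c)⁻¹ = !![1, 0, 0; 0, 1, c; 0, c, 1 + c ^ 2] := by
  refine inv_eq_right_inv ?_
  ext i k
  fin_cases i <;> fin_cases k <;>
    simp [cylMetricMatrix, mul_apply, Fin.sum_univ_three, one_apply] <;> ring

lemma sq_sub_sq_div_two_le_integral_sqrt_one_add_sq {a b : ℝ} (hab : a ≤ b) :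
    (b ^ 2 - a ^ 2) / 2 ≤ ∫ x in a..b, √(1 + x ^ 2) := by
  rw [← integral_id]
  refine integral_mono_on hab intervalIntegrable_id
    ((by fun_prop : Continuous fun x : ℝ ↦ √(1 + x ^ 2)).intervalIntegrable a b) fun x _ ↦ ?_
  exact Real.le_sqrt_of_sq_le (by linarith)

theorem cylinder_metric_dz_norm_and_area_bound (j : ℝ) (hj : 2 ≤ j) :
    (∀ x ∈ Set.Icc (0:ℝ) (2 * j),
      (cylMetricMatrix (min x (2 * j - x))).PosDef ∧
      (cylMetricMatrix (min x (2 * j - x)))⁻¹ 2 2 = 1 + (min x (2 * j - x)) ^ 2) ∧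
    (j - 2) ^ 2 / 2 ≤ ∫ x in (1:ℝ)..(j - 1), Real.sqrt (1 + x ^ 2) := by
  refine ⟨fun x _ ↦ ⟨cylMetricMatrix_posDef _, ?_⟩, ?_⟩
  · rw [cylMetricMatrix_inv]
    rfl
  · have h := sq_sub_sq_div_two_le_integral_sqrt_one_add_sq (show (1 : ℝ) ≤ j - 1 by linarith)
    nlinarith
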